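/- Fix p ≥ 1. For every compact set K ⊆ (0,∞)^p × ℝ^p there exist constants c_K, d_K ∈ (0,∞) such that for every (a,b) ∈ K, letting J be the two-sided p-periodic Jacobi operator obtained by extending (a,b) periodically, and for every α = (α_0, …, α_p) ∈ ℝ^{p+1}: c_K · N(α, J) ≤ (Σ_{ℓ=0}^{p} α_ℓ²)^{1/2} ≤ d_K · N(α, J), where N(α, J) := ( Σ_{j=1}^{p+1} ‖(Σ_{ℓ=0}^{p} α_ℓ J^ℓ) δ_j‖² )^{1/2} is the Hilbert–Schmidt norm of (Σ_ℓ α_ℓ J^ℓ) χ_{p+1}, with χ_{p+1} the orthogonal projection onto the span of δ_1, …, δ_{p+1}. -/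

import Mathlib

open scoped ComplexConjugate

noncomputable section

/-- The two-sided Hilbert space `ℓ²(ℤ)`. -/
abbrev HZ : Type := lp (fun _ : ℤ => ℂ) 2

/-- The standard basis vectors. -/
def deltaZ (k : ℤ) : HZ := lp.single 2 k 1

/-- Periodic extension: `(pext v)_n = v_{(n−1) mod p}`. -/
def pext {p : ℕ} (v : Fin p → ℝ) : ℤ → ℝ := fun n =>
  if h : 0 < p then
    v ⟨((n - 1) % (p : ℤ)).toNat, by
      have hp' : (0 : ℤ) < (p : ℤ) := by exact_mod_cast h
      have h1 : 0 ≤ (n - 1) % (p : ℤ) := Int.emod_nonneg _ (ne_of_gt hp')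
      have h2 : (n - 1) % (p : ℤ) < (p : ℤ) := Int.emod_lt_of_pos _ hp'
      omega⟩
  else 0

/-- `N(α, J)`: the Hilbert–Schmidt norm of `(Σ_ℓ α_ℓ J^ℓ) χ_{p+1}`, i.e.
`(Σ_{j=1}^{p+1} ‖(Σ_ℓ α_ℓ J^ℓ) δ_j‖²)^{1/2}`. -/
def opN (p : ℕ) (J : HZ →L[ℂ] HZ) (α : Fin (p + 1) → ℝ) : ℝ :=
  Real.sqrt (∑ j ∈ Finset.range (p + 1),
    ‖(∑ l : Fin (p + 1), (α l : ℂ) • J ^ (l : ℕ)) (deltaZ ((j : ℤ) + 1))‖ ^ 2)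

/-!
`N(α, J)²` is a finite sum of squares of the entries of `P(J) δ_j`, `P(x) = ∑ α_ℓ x^ℓ`, which
are linear in `α` with coefficients continuous in `(a, b)`. It is positive definite in `α`:
if `α_d` is the top nonzero coefficient, the entry of `P(J) δ_1` at `1 + d` is
`α_d a_1 ⋯ a_d ≠ 0`. Both `N` and the Euclidean norm of `α` are homogeneous of degree one in
`α` and continuous in `((a, b), α)`, so comparing them on the compact set `K × {‖α‖ = 1}`
gives the constants.
-/

lemma lp.norm_sq_eq_sum_of_support {ι : Type*} {E : ι → Type*} [∀ i, NormedAddCommGroup (E i)]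
    (u : lp E 2) {s : Finset ι} (hs : ∀ i ∉ s, u i = 0) :
    ‖u‖ ^ 2 = ∑ i ∈ s, ‖u i‖ ^ 2 := by
  have h := lp.norm_rpow_eq_tsum (p := 2) (by norm_num) u
  simp only [ENNReal.toReal_ofNat, Real.rpow_two] at h
  rw [h, tsum_eq_sum fun i hi => by simp [hs i hi]]

lemma deltaZ_apply (j n : ℤ) : deltaZ j n = if n = j then 1 else 0 := by
  simp [deltaZ, Pi.single_apply]

lemma pext_pos {p : ℕ} (hp : 0 < p) {v : Fin p → ℝ} (hv : ∀ i, 0 < v i) (n : ℤ) :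
    0 < pext v n := by
  rw [pext, dif_pos hp]
  exact hv _

lemma continuous_pext {p : ℕ} (n : ℤ) : Continuous fun v : Fin p → ℝ => pext v n := by
  unfold pext
  split_ifs
  exacts [continuous_apply _, continuous_const]

section Jacobi

variable {a b : ℤ → ℝ}

def IsJacobiOperator (J : HZ →L[ℂ] HZ) (a b : ℤ → ℝ) : Prop :=
  ∀ (u : HZ) (n : ℤ),
    J u n = (a (n - 1) : ℂ) * u (n - 1) + (b n : ℂ) * u n + (a n : ℂ) * u (n + 1)

/-- `jacobiPowEntry a b j l n` is the matrix entry `⟨δ_n, J^l δ_j⟩` of `J = J(a, b)`. -/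
def jacobiPowEntry (a b : ℤ → ℝ) (j : ℤ) : ℕ → ℤ → ℝ
  | 0 => fun n => if n = j then 1 else 0
  | l + 1 => fun n => a (n - 1) * jacobiPowEntry a b j l (n - 1)
      + b n * jacobiPowEntry a b j l n + a n * jacobiPowEntry a b j l (n + 1)

lemma jacobiPowEntry_eq_zero {j : ℤ} {l : ℕ} {n : ℤ} (h : n < j - l ∨ j + l < n) :
    jacobiPowEntry a b j l n = 0 := by
  induction l generalizing n with
  | zero => simp only [jacobiPowEntry]; rw [if_neg]; omega
  | succ l ih =>
    push_cast at h
    simp only [jacobiPowEntry]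
    rw [ih (by omega), ih (by omega), ih (by omega)]
    ring

lemma jacobiPowEntry_add_self (j : ℤ) (l : ℕ) :
    jacobiPowEntry a b j l (j + l) = ∏ i ∈ Finset.range l, a (j + i) := by
  induction l with
  | zero => simp [jacobiPowEntry]
  | succ l ih =>
    simp only [jacobiPowEntry, Finset.prod_range_succ, Nat.cast_succ]
    rw [show j + (l + 1) - 1 = j + l by ring, ih,
      jacobiPowEntry_eq_zero (n := j + (l + 1)) (by omega),
      jacobiPowEntry_eq_zero (n := j + (l + 1) + 1) (by omega)]
    ring

lemma jacobiPowEntry_add_self_pos (ha : ∀ n, 0 < a n) (j : ℤ) (l : ℕ) :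
    0 < jacobiPowEntry a b j l (j + l) := by
  rw [jacobiPowEntry_add_self]
  exact Finset.prod_pos fun i _ => ha _

lemma continuous_jacobiPowEntry {X : Type*} [TopologicalSpace X] {a b : X → ℤ → ℝ}
    (ha : ∀ n, Continuous fun x => a x n) (hb : ∀ n, Continuous fun x => b x n)
    (j : ℤ) (l : ℕ) (n : ℤ) : Continuous fun x => jacobiPowEntry (a x) (b x) j l n := by
  induction l generalizing n with
  | zero => exact continuous_const
  | succ l ih =>
    exact (((ha _).mul (ih _)).add ((hb _).mul (ih _))).add ((ha _).mul (ih _))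

lemma IsJacobiOperator.pow_apply_deltaZ {J : HZ →L[ℂ] HZ} (hJ : IsJacobiOperator J a b)
    (j : ℤ) (l : ℕ) (n : ℤ) : (J ^ l) (deltaZ j) n = jacobiPowEntry a b j l n := by
  induction l generalizing n with
  | zero =>
    rw [pow_zero, one_apply_eq_self, deltaZ_apply]
    split_ifs <;> simp [jacobiPowEntry, *]
  | succ l ih =>
    rw [pow_succ', mul_apply_eq_comp, hJ, ih, ih, ih]
    simp only [jacobiPowEntry]
    push_cast
    ring

/-- The entry `⟨δ_n, P(J) δ_j⟩` for the polynomial `P(x) = ∑_{l < m} α_l x^l`. -/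
def jacobiPolyEntry (a b : ℤ → ℝ) {m : ℕ} (α : Fin m → ℝ) (j n : ℤ) : ℝ :=
  ∑ l : Fin m, α l * jacobiPowEntry a b j l n

variable {m : ℕ}

lemma IsJacobiOperator.poly_apply_deltaZ {J : HZ →L[ℂ] HZ} (hJ : IsJacobiOperator J a b)
    (α : Fin m → ℝ) (j n : ℤ) :
    (∑ l : Fin m, (α l : ℂ) • J ^ (l : ℕ)) (deltaZ j) n = jacobiPolyEntry a b α j n := by
  rw [sum_apply, lp.coeFn_sum, Finset.sum_apply, jacobiPolyEntry, Complex.ofReal_sum]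
  refine Finset.sum_congr rfl fun l _ => ?_
  rw [smul_apply, lp.coeFn_smul, Pi.smul_apply, smul_eq_mul, hJ.pow_apply_deltaZ,
    Complex.ofReal_mul]

lemma jacobiPolyEntry_eq_zero (α : Fin m → ℝ) {j n : ℤ} (h : n < j - m ∨ j + m < n) :
    jacobiPolyEntry a b α j n = 0 :=
  Finset.sum_eq_zero fun l _ => by rw [jacobiPowEntry_eq_zero (by omega), mul_zero]

lemma jacobiPolyEntry_smul (t : ℝ) (α : Fin m → ℝ) (j n : ℤ) :
    jacobiPolyEntry a b (t • α) j n = t * jacobiPolyEntry a b α j n := by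
  simp only [jacobiPolyEntry, Finset.mul_sum, Pi.smul_apply, smul_eq_mul, mul_assoc]

/-- The top-degree coefficient of `P` shows up alone in the entry `j + deg P`, multiplied
by `a_j ⋯ a_{j + deg P - 1} > 0`. -/
lemma exists_jacobiPolyEntry_ne_zero (ha : ∀ n, 0 < a n) {α : Fin m → ℝ} (hα : α ≠ 0)
    (j : ℤ) : ∃ l : Fin m, jacobiPolyEntry a b α j (j + l) ≠ 0 := by
  have hsupp : (Finset.univ.filter fun l => α l ≠ 0).Nonempty := by
    simpa [Finset.filter_nonempty_iff, funext_iff] using hα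
  set deg := (Finset.univ.filter fun l => α l ≠ 0).max' hsupp
  have hdeg : α deg ≠ 0 := (Finset.mem_filter.mp (Finset.max'_mem _ hsupp)).2
  refine ⟨deg, ?_⟩
  rw [jacobiPolyEntry, Finset.sum_eq_single deg]
  · exact mul_ne_zero hdeg (jacobiPowEntry_add_self_pos ha j deg).ne'
  · intro l _ hl
    by_cases hαl : α l = 0
    · rw [hαl, zero_mul]
    · have hle : l ≤ deg := Finset.le_max' _ _ (by simpa using hαl)
      have hlt : (l : ℕ) < deg := lt_of_le_of_ne hle (Fin.val_ne_of_ne hl)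
      rw [jacobiPowEntry_eq_zero (by omega), mul_zero]
  · simp

/-- `opN ^ 2` as a finite sum: `P(J) δ_j` is supported in `[j - m, j + m]`. -/
def hsNormSq (a b : ℤ → ℝ) (α : Fin m → ℝ) : ℝ :=
  ∑ j ∈ Finset.range m, ∑ n ∈ Finset.Icc ((j : ℤ) + 1 - m) ((j : ℤ) + 1 + m),
    jacobiPolyEntry a b α ((j : ℤ) + 1) n ^ 2

lemma IsJacobiOperator.opN_eq {p : ℕ} {J : HZ →L[ℂ] HZ} (hJ : IsJacobiOperator J a b)
    (α : Fin (p + 1) → ℝ) : opN p J α = √(hsNormSq a b α) := by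
  unfold opN hsNormSq
  congr 1
  refine Finset.sum_congr rfl fun j _ => ?_
  rw [lp.norm_sq_eq_sum_of_support _
    (s := Finset.Icc ((j : ℤ) + 1 - (p + 1 : ℕ)) ((j : ℤ) + 1 + (p + 1 : ℕ))) fun n hn => ?_]
  · simp only [hJ.poly_apply_deltaZ, Complex.norm_real, Real.norm_eq_abs, sq_abs]
  · rw [Finset.mem_Icc, not_and_or, not_le, not_le] at hn
    rw [hJ.poly_apply_deltaZ, jacobiPolyEntry_eq_zero _ (by omega), Complex.ofReal_zero]

lemma hsNormSq_smul (t : ℝ) (α : Fin m → ℝ) :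
    hsNormSq a b (t • α) = t ^ 2 * hsNormSq a b α := by
  simp only [hsNormSq, jacobiPolyEntry_smul, mul_pow, Finset.mul_sum]

lemma hsNormSq_pos (ha : ∀ n, 0 < a n) {α : Fin m → ℝ} (hα : α ≠ 0) :
    0 < hsNormSq a b α := by
  have hm : 0 < m := Nat.pos_of_ne_zero fun h => hα (funext fun l => (h ▸ l).elim0)
  obtain ⟨l, hl⟩ := exists_jacobiPolyEntry_ne_zero (b := b) ha hα 1
  refine Finset.sum_pos' (fun _ _ => Finset.sum_nonneg fun _ _ => sq_nonneg _)
    ⟨0, Finset.mem_range.mpr hm, Finset.sum_pos' (fun _ _ => sq_nonneg _) ⟨1 + l, ?_, ?_⟩⟩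
  · simp only [Finset.mem_Icc]
    omega
  · exact sq_pos_of_ne_zero hl

lemma continuous_hsNormSq {X : Type*} [TopologicalSpace X] {a b : X → ℤ → ℝ}
    {α : X → Fin m → ℝ} (ha : ∀ n, Continuous fun x => a x n)
    (hb : ∀ n, Continuous fun x => b x n) (hα : Continuous α) :
    Continuous fun x => hsNormSq (a x) (b x) (α x) :=
  continuous_finsetSum _ fun _ _ => continuous_finsetSum _ fun _ _ =>
    (continuous_finsetSum _ fun l _ =>
      ((continuous_apply l).comp hα).mul (continuous_jacobiPowEntry ha hb _ _ _)).pow 2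

end Jacobi

/-- Compare both on the compact set `K × sphere 0 1`, where `f` is bounded above and `g`
is bounded below by a positive constant. -/
lemma exists_pos_mul_le_of_homogeneous {X E : Type*} [TopologicalSpace X]
    [NormedAddCommGroup E] [NormedSpace ℝ E] [ProperSpace E] {K : Set X} (hK : IsCompact K)
    {f g : X → E → ℝ} (hf : Continuous (Function.uncurry f))
    (hf_smul : ∀ x (t : ℝ) v, f x (t • v) = |t| * f x v) (hg : Continuous (Function.uncurry g))
    (hg_smul : ∀ x (t : ℝ) v, g x (t • v) = |t| * g x v)
    (hg_pos : ∀ x ∈ K, ∀ v ≠ 0, 0 < g x v) :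
    ∃ c > 0, ∀ x ∈ K, ∀ v, c * f x v ≤ g x v := by
  have hS : IsCompact (K ×ˢ Metric.sphere (0 : E) 1) := hK.prod (isCompact_sphere 0 1)
  obtain ⟨M, hM⟩ := hS.bddAbove_image hf.continuousOn
  obtain ⟨μ, hμ, hgμ⟩ := hS.exists_forall_le' hg.continuousOn fun y hy =>
    hg_pos y.1 hy.1 y.2 (ne_zero_of_mem_unit_sphere ⟨y.2, hy.2⟩)
  have hM1 : 0 < max M 1 := lt_max_of_lt_right one_pos
  refine ⟨μ / max M 1, by positivity, fun x hx v => ?_⟩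
  rcases eq_or_ne v 0 with rfl | hv
  · have h0 := hf_smul x 0 0
    have h0' := hg_smul x 0 0
    simp only [zero_smul, abs_zero, zero_mul] at h0 h0'
    rw [h0, h0', mul_zero]
  set u := ‖v‖⁻¹ • v
  have hu : (x, u) ∈ K ×ˢ Metric.sphere (0 : E) 1 :=
    ⟨hx, mem_sphere_zero_iff_norm.mpr (norm_smul_inv_norm hv)⟩
  have hfu : f x u ≤ max M 1 := (hM ⟨_, hu, rfl⟩).trans (le_max_left _ _)
  rw [← smul_inv_smul₀ (norm_ne_zero_iff.mpr hv) v, hf_smul, hg_smul, abs_norm]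
  calc μ / max M 1 * (‖v‖ * f x u) ≤ μ / max M 1 * (‖v‖ * max M 1) := by gcongr
    _ = ‖v‖ * μ := by field_simp
    _ ≤ ‖v‖ * g x u := by gcongr; exact hgμ _ hu

lemma sqrt_smul_of_quadratic {E : Type*} [SMul ℝ E] {q : E → ℝ}
    (hq : ∀ (t : ℝ) v, q (t • v) = t ^ 2 * q v) (t : ℝ) (v : E) :
    √(q (t • v)) = |t| * √(q v) := by
  rw [hq, Real.sqrt_mul (sq_nonneg t), Real.sqrt_sq_eq_abs]

/-- on a compact set of periodic Jacobi parameters, the Euclidean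
norm of `(α_0,…,α_p)` is uniformly comparable to the Hilbert–Schmidt norm of
`(Σ_ℓ α_ℓ J^ℓ) χ_{p+1}`. -/
theorem statement13 (p : ℕ) (hp : 1 ≤ p)
    (K : Set ((Fin p → ℝ) × (Fin p → ℝ))) (hKc : IsCompact K)
    (hKpos : ∀ vw ∈ K, ∀ j, 0 < vw.1 j) :
    ∃ c d : ℝ, 0 < c ∧ 0 < d ∧
      ∀ vw ∈ K, ∀ J : HZ →L[ℂ] HZ,
        (∀ (u : HZ) (n : ℤ),
          (J u) n = (pext vw.1 (n - 1) : ℂ) * u (n - 1) + (pext vw.2 n : ℂ) * u n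
            + (pext vw.1 n : ℂ) * u (n + 1)) →
        ∀ α : Fin (p + 1) → ℝ,
          c * opN p J α ≤ Real.sqrt (∑ l : Fin (p + 1), (α l) ^ 2) ∧
          Real.sqrt (∑ l : Fin (p + 1), (α l) ^ 2) ≤ d * opN p J α := by
  set N : (Fin p → ℝ) × (Fin p → ℝ) → (Fin (p + 1) → ℝ) → ℝ :=
    fun vw α => √(hsNormSq (pext vw.1) (pext vw.2) α)
  set E : (Fin p → ℝ) × (Fin p → ℝ) → (Fin (p + 1) → ℝ) → ℝ :=
    fun _ α => √(∑ l, α l ^ 2)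
  have hN : Continuous (Function.uncurry N) := Real.continuous_sqrt.comp <|
    continuous_hsNormSq (fun n => (continuous_pext n).comp (continuous_fst.comp continuous_fst))
      (fun n => (continuous_pext n).comp (continuous_snd.comp continuous_fst)) continuous_snd
  have hE : Continuous (Function.uncurry E) := by fun_prop
  have hN_smul vw t α : N vw (t • α) = |t| * N vw α :=
    sqrt_smul_of_quadratic (fun _ _ => hsNormSq_smul _ _) t α
  have hE_smul vw t α : E vw (t • α) = |t| * E vw α :=
    sqrt_smul_of_quadratic (q := fun α : Fin (p + 1) → ℝ => ∑ l, α l ^ 2)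
      (fun t α => by simp [mul_pow, Finset.mul_sum]) t α
  have hN_pos : ∀ vw ∈ K, ∀ α ≠ 0, 0 < N vw α := fun vw hvw α hα =>
    Real.sqrt_pos.mpr (hsNormSq_pos (pext_pos hp (hKpos vw hvw)) hα)
  have hE_pos : ∀ vw ∈ K, ∀ α ≠ 0, 0 < E vw α := fun vw _ α hα => by
    obtain ⟨l, hl⟩ := Function.ne_iff.mp hα
    exact Real.sqrt_pos.mpr
      (Finset.sum_pos' (fun _ _ => sq_nonneg _) ⟨l, Finset.mem_univ l, sq_pos_of_ne_zero hl⟩)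
  obtain ⟨c, hc, hNE⟩ := exists_pos_mul_le_of_homogeneous hKc hN hN_smul hE hE_smul hE_pos
  obtain ⟨c', hc', hEN⟩ := exists_pos_mul_le_of_homogeneous hKc hE hE_smul hN hN_smul hN_pos
  refine ⟨c, c'⁻¹, hc, inv_pos.mpr hc', fun vw hvw J hJ α => ?_⟩
  rw [IsJacobiOperator.opN_eq hJ]
  exact ⟨hNE vw hvw α, (le_inv_mul_iff₀ hc').mpr (hEN vw hvw α)⟩
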